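/- Let l1, l2, l3 be integers, each at least 2. Then the sum over all six permutations σ of {1,2,3} of the products ζ(l_{σ(1)}, l_{σ(2)})·ζ(l_{σ(3)}) satisfies Σ_{σ ∈ S3} ζ(l_{σ(1)}, l_{σ(2)})·ζ(l_{σ(3)}) = 3·ζ(l1)ζ(l2)ζ(l3) − [ζ(l1+l2)ζ(l3) + ζ(l1+l3)ζ(l2) + ζ(l2+l3)ζ(l1)]. (Equation (2) of the paper's depth-3 lemma in Section 4.2, restricted to convergent indices; there the sum is indexed by the set C3·S2, which equals S3.) -/

import Mathlib

/-! Splitting the double series `∑_{m, n ≥ 1} m^{-a} n^{-b}` according to `m > n`, `m < n` and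
`m = n` gives the harmonic product `ζ(a) ζ(b) = ζ(a, b) + ζ(b, a) + ζ(a + b)`. The six terms of the
sum over `S₃` pair up as `(ζ(a, b) + ζ(b, a)) ζ(c)` for the three ways to single out `c`, and each
pair is rewritten by the harmonic product. -/

open Classical in
/-- The multiple zeta value `ζ(l 0, l 1, …, l (n-1)) =
∑_{m 0 > m 1 > ⋯ > m (n-1) ≥ 1} ∏ i, 1 / (m i) ^ (l i)`. -/
noncomputable def mzv {n : ℕ} (l : Fin n → ℕ) : ℝ :=
  ∑' m : Fin n → ℕ,
    if StrictAnti m ∧ ∀ i, 1 ≤ m i then ∏ i, (1 : ℝ) / (m i : ℝ) ^ (l i) else 0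

lemma tsum_prod_eq_tsum_lt_add_tsum_gt_add_tsum_diag {α E : Type*} [LinearOrder α]
    [NormedAddCommGroup E] [CompleteSpace E] {F : α × α → E} (hF : Summable F) :
    ∑' p, F p = ∑' p, (if p.2 < p.1 then F p else 0) + ∑' p, (if p.1 < p.2 then F p else 0)
      + ∑' a, F (a, a) := by
  have restrict (P : α × α → Prop) [DecidablePred P] :
      Summable fun p => if P p then F p else 0 := by
    convert hF.indicator {p | P p} using 1
    ext p
    simp [Set.indicator_apply]
  have diag : ∑' a, F (a, a) = ∑' p, if p.1 = p.2 then F p else 0 := by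
    have hinj : Function.Injective fun a : α => (a, a) := fun a b h => (Prod.ext_iff.mp h).1
    rw [← hinj.tsum_eq]
    · simp
    · rintro ⟨a, b⟩ h
      obtain rfl : a = b := by by_contra hab; simp [hab] at h
      exact ⟨a, rfl⟩
  rw [diag, ← (restrict fun p => p.2 < p.1).tsum_add (restrict fun p => p.1 < p.2),
    ← ((restrict _).add (restrict _)).tsum_add (restrict fun p => p.1 = p.2)]
  refine tsum_congr fun p => ?_
  rcases lt_trichotomy p.1 p.2 with h | h | h
  · simp [h, h.not_gt, h.ne]
  · simp [h]
  · simp [h, h.not_gt, h.ne']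

lemma mzv_singleton {k : ℕ} (hk : k ≠ 0) : mzv ![k] = ∑' m : ℕ, 1 / (m : ℝ) ^ k := by
  rw [mzv, ← (Equiv.funUnique (Fin 1) ℕ).symm.tsum_eq]
  refine tsum_congr fun m => ?_
  rcases m.eq_zero_or_pos with rfl | hm
  · simp [hk]
  · simp [Subsingleton.strictAnti, Nat.one_le_iff_ne_zero.mpr hm.ne']

lemma mzv_pair (a : ℕ) {b : ℕ} (hb : b ≠ 0) :
    mzv ![a, b] = ∑' p : ℕ × ℕ,
      if p.2 < p.1 then 1 / (p.1 : ℝ) ^ a * (1 / (p.2 : ℝ) ^ b) else 0 := by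
  rw [mzv, ← (piFinTwoEquiv fun _ => ℕ).symm.tsum_eq]
  refine tsum_congr fun ⟨m, n⟩ => ?_
  rcases n.eq_zero_or_pos with rfl | hn
  · simp [hb]
  · have hm : n < m → 1 ≤ m := by omega
    simp [Fin.strictAnti_iff_succ_lt, Fin.forall_fin_two, Nat.one_le_iff_ne_zero.mpr hn.ne',
      mul_comm, and_iff_left_of_imp hm]

lemma mzv_singleton_mul_mzv_singleton {a b : ℕ} (ha : 2 ≤ a) (hb : 2 ≤ b) :
    mzv ![a] * mzv ![b] = mzv ![a, b] + mzv ![b, a] + mzv ![a + b] := by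
  have hf : Summable fun m : ℕ => 1 / (m : ℝ) ^ a := Real.summable_one_div_nat_pow.mpr ha
  have hg : Summable fun m : ℕ => 1 / (m : ℝ) ^ b := Real.summable_one_div_nat_pow.mpr hb
  have hfg := hf.mul_of_nonneg hg (fun _ => by positivity) (fun _ => by positivity)
  rw [mzv_singleton (by omega), mzv_singleton (by omega), hf.tsum_mul_tsum hg hfg,
    tsum_prod_eq_tsum_lt_add_tsum_gt_add_tsum_diag hfg, mzv_pair a (by omega),
    mzv_pair b (by omega), mzv_singleton (by omega)]
  congr 2
  · rw [← (Equiv.prodComm ℕ ℕ).tsum_eq]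
    refine tsum_congr fun p => ?_
    simp [mul_comm]
  · funext m
    rw [pow_add, one_div_mul_one_div]

theorem symmetric_sum_depth_two_times_depth_one (l1 l2 l3 : ℕ)
    (h1 : 2 ≤ l1) (h2 : 2 ≤ l2) (h3 : 2 ≤ l3) :
    (∑ σ : Equiv.Perm (Fin 3),
        mzv ![![l1, l2, l3] (σ 0), ![l1, l2, l3] (σ 1)]
          * mzv ![![l1, l2, l3] (σ 2)]) =
      3 * (mzv ![l1] * mzv ![l2] * mzv ![l3])
        - (mzv ![l1 + l2] * mzv ![l3] + mzv ![l1 + l3] * mzv ![l2]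
            + mzv ![l2 + l3] * mzv ![l1]) := by
  have perms : (Finset.univ : Finset (Equiv.Perm (Fin 3))) =
      {1, Equiv.swap 0 1, Equiv.swap 0 2, Equiv.swap 1 2,
        Equiv.swap 0 1 * Equiv.swap 1 2, Equiv.swap 1 2 * Equiv.swap 0 1} := by
    decide
  simp +decide only [perms, Finset.mem_insert, Finset.mem_singleton, Finset.sum_insert,
    Finset.sum_singleton, Equiv.Perm.coe_one, Equiv.Perm.coe_mul, id_eq, Function.comp_apply,
    Equiv.swap_apply_left, Equiv.swap_apply_right, Equiv.swap_apply_of_ne_of_ne, ne_eq,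
    not_false_eq_true, Matrix.cons_val_zero, Matrix.cons_val_one, Matrix.cons_val]
  linear_combination -(mzv ![l3] * mzv_singleton_mul_mzv_singleton h1 h2
    + mzv ![l2] * mzv_singleton_mul_mzv_singleton h1 h3
    + mzv ![l1] * mzv_singleton_mul_mzv_singleton h2 h3)
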